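/- arXiv:1203.3051 — 3 statements merged into one kernel-verified Lean document; each statement's English description precedes it below -/
import Mathlib

section
/- Let X_1,…,X_k be voting rules and T a tie-breaking mechanism on a finite candidate set C. If at least one X_j is Condorcet consistent and T is Condorcet consistent, then the combined rule X_1+⋯+X_k is Condorcet consistent: for every nonempty S ⊆ C and every profile P on S having a Condorcet winner w ∈ S (i.e. N_P(w,z) > N_P(z,w) for every z ∈ S∖{w}), the combined rule elects w. -/
/-
Framework: a finite candidate set `C`. A vote on a nonempty `S ⊆ C` is a strict
linear order on `S`, encoded as a duplicate-free list enumerating `S` (earlier =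
more preferred); a profile on `S` is a finite list of such votes. A voting rule /
tie-breaking mechanism is a function assigning to every `(S, P)` a candidate,
required to lie in `S` when `S` is nonempty. The combined rule `X_1 + ⋯ + X_k`
(with tie-breaking `T`) is defined by the recursive run-off construction.
-/

variable {C : Type*}

/-- The type of (total) choice functions, used both for voting rules and
tie-breaking mechanisms. -/
abbrev Rule (C : Type*) := Finset C → List (List C) → C

/-- `R` is a genuine voting rule (or tie-breaking mechanism): it always picks a
member of the given nonempty candidate set. -/
def IsRule [DecidableEq C] (R : Rule C) : Prop := ∀ S P, S.Nonempty → R S P ∈ S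

/-- `v` is a vote on `S`: a strict linear order of the members of `S`. -/
def VoteOn [DecidableEq C] (S : Finset C) (v : List C) : Prop := v.Nodup ∧ v.toFinset = S

/-- `P` is a profile on `S`. -/
def ProfileOn [DecidableEq C] (S : Finset C) (P : List (List C)) : Prop := ∀ v ∈ P, VoteOn S v

/-- Restriction `P|_W` of a profile to a subset `W` of candidates. -/
def restrictProfile [DecidableEq C] (W : Finset C) (P : List (List C)) : List (List C) :=
  P.map fun v => v.filter (fun x => x ∈ W)

/-- The combined rule `X_0 + ⋯ + X_k` with tie-breaking mechanism `T`:
collect the set `W` of winners of the base rules; if `W` is a singleton, that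
candidate wins; if `W = S`, the tie-breaking mechanism decides; otherwise
recurse on `(W, P|_W)`. (The final `else` branch is unreachable for genuine
voting rules, since then `W ⊆ S` always holds.) -/
def combined [DecidableEq C] {k : ℕ} (X : Fin (k + 1) → Rule C) (T : Rule C) :
    Finset C → List (List C) → C
  | S, P =>
    let W : Finset C := Finset.image (fun j => X j S P) Finset.univ
    if W.card = 1 then X 0 S P
    else if W = S then T S P
    else if h : W ⊂ S then combined X T W (restrictProfile W P)
    else T S P
  termination_by S _ => S.card
  decreasing_by exact Finset.card_lt_card h

/-- `N P x y`: the number of votes in `P` ranking `x` above `y`. -/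
def pairN [DecidableEq C] (P : List (List C)) (x y : C) : ℕ :=
  (P.filter (fun v => v.idxOf x < v.idxOf y)).length

/-- `R` is Condorcet consistent: whenever a profile `P` on `S` has a Condorcet
winner `w ∈ S` (i.e. `N_P(w,z) > N_P(z,w)` for every `z ∈ S \ {w}`), `R`
elects `w`. -/
def CondorcetConsistent [DecidableEq C] (R : Rule C) : Prop :=
  ∀ (S : Finset C) (P : List (List C)) (w : C),
    S.Nonempty → ProfileOn S P → w ∈ S →
    (∀ z ∈ S, z ≠ w → pairN P w z > pairN P z w) → R S P = w

/-! A Condorcet winner `w` of `(S, P)` is elected by the Condorcet consistent base rule, so it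
lies in the set `W` of base winners. Restricting the votes to `W` does not change the relative
order of two members of `W`, so `w` is still the Condorcet winner of `(W, P|_W)`, and induction
along the recursion of the combined rule ends either in the singleton `{w}` or in a call of the
Condorcet consistent tie-breaking mechanism. -/

theorem List.idxOf_filter_lt_idxOf_filter_iff {α : Type*} [DecidableEq α] {p : α → Bool}
    {x y : α} (hx : p x) (hy : p y) (l : List α) :
    (l.filter p).idxOf x < (l.filter p).idxOf y ↔ l.idxOf x < l.idxOf y := by
  induction l with
  | nil => simp
  | cons a l ih =>
    by_cases hpa : p a <;> by_cases hax : a = x <;> by_cases hay : a = y <;> simp_all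

theorem pairN_restrictProfile [DecidableEq C] (W : Finset C) (P : List (List C)) {x y : C}
    (hx : x ∈ W) (hy : y ∈ W) : pairN (restrictProfile W P) x y = pairN P x y := by
  simp only [pairN, restrictProfile, List.filter_map, List.length_map]
  congr 1
  refine List.filter_congr fun v _ => ?_
  exact decide_eq_decide.mpr (List.idxOf_filter_lt_idxOf_filter_iff (by simpa) (by simpa) v)

theorem ProfileOn.restrictProfile [DecidableEq C] {S W : Finset C} {P : List (List C)}
    (hP : ProfileOn S P) (hWS : W ⊆ S) : ProfileOn W (restrictProfile W P) := by
  simp only [ProfileOn, _root_.restrictProfile, List.mem_map]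
  rintro _ ⟨v, hv, rfl⟩
  obtain ⟨hnodup, rfl⟩ := hP v hv
  refine ⟨hnodup.filter _, ?_⟩
  ext a
  simpa using fun ha => List.mem_toFinset.mp (hWS ha)

theorem combined_condorcet_general [DecidableEq C] {k : ℕ}
    (X : Fin (k + 1) → Rule C) (T : Rule C)
    (hC : ∃ j, CondorcetConsistent (X j)) (hTC : CondorcetConsistent T) :
    CondorcetConsistent (combined X T) := by
  obtain ⟨j, hj⟩ := hC
  intro S P w hS hP hw hcond
  fun_induction combined X T S P generalizing w with
  | case1 S P W hW =>
    have hwW : w ∈ W := hj S P w hS hP hw hcond ▸ Finset.mem_image_of_mem _ (Finset.mem_univ j)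
    have h0W : X 0 S P ∈ W := Finset.mem_image_of_mem _ (Finset.mem_univ 0)
    exact Finset.card_le_one.mp hW.le _ h0W _ hwW
  | case2 S P W _ _ => exact hTC S P w hS hP hw hcond
  | case3 S P W _ _ hWS ih =>
    have hwW : w ∈ W := hj S P w hS hP hw hcond ▸ Finset.mem_image_of_mem _ (Finset.mem_univ j)
    refine ih w ⟨w, hwW⟩ (hP.restrictProfile hWS.subset) hwW fun z hz hzw => ?_
    rw [pairN_restrictProfile W P hwW hz, pairN_restrictProfile W P hz hwW]
    exact hcond z (hWS.subset hz) hzw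
  | case4 S P W _ _ _ => exact hTC S P w hS hP hw hcond

/-- If at least one of the base voting rules is Condorcet consistent and the
tie-breaking mechanism is Condorcet consistent, then the combined rule
`X_0 + ⋯ + X_k` is Condorcet consistent. -/
theorem combined_condorcet [DecidableEq C] [Fintype C] {k : ℕ}
    (X : Fin (k + 1) → Rule C) (T : Rule C)
    (hX : ∀ j, IsRule (X j)) (hT : IsRule T)
    (hC : ∃ j, CondorcetConsistent (X j)) (hTC : CondorcetConsistent T) :
    CondorcetConsistent (combined X T) :=
  combined_condorcet_general X T hC hTC
end

section
/- The voting-rule combinator satisfies the absorption law (X+Y)+X = X+Y: for all voting rules X and Y and every tie-breaking mechanism T, if the combined rule X+Y (with tie-breaking T) is itself regarded as a voting rule, then the combined rule (X+Y)+X (with the same tie-breaking mechanism T) elects the same winner as X+Y on every nonempty S ⊆ C and every profile P on S. -/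
/-
Framework: a finite candidate set `C`. A vote on a nonempty `S ⊆ C` is a strict
linear order on `S`, encoded as a duplicate-free list enumerating `S` (earlier =
more preferred); a profile on `S` is a finite list of such votes. A voting rule /
tie-breaking mechanism is a function assigning to every `(S, P)` a candidate,
required to lie in `S` when `S` is nonempty. The combined rule `X_1 + ⋯ + X_k`
(with tie-breaking `T`) is defined by the recursive run-off construction.
-/

variable {C : Type*}

/-!
If `(X+Y)(S,P) = X(S,P)`, the winner set of `(X+Y)+X` on `S` is a singleton and both sides elect
it. Otherwise `X+Y` elects `Y(S,P) ≠ X(S,P)`, since it always elects one of its base winners, so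
`(X+Y)+X` and `X+Y` see the same winner set `{X(S,P), Y(S,P)}`: either both break the tie with
`T`, or both recurse on that smaller set, where induction applies.
-/

section Combined

variable [DecidableEq C]

def winners {k : ℕ} (X : Fin (k + 1) → Rule C) (S : Finset C) (P : List (List C)) : Finset C :=
  Finset.univ.image fun j => X j S P

theorem combined_eq {k : ℕ} (X : Fin (k + 1) → Rule C) (T : Rule C) (S : Finset C)
    (P : List (List C)) :
    combined X T S P =
      if (winners X S P).card = 1 then X 0 S P
      else if winners X S P = S then T S P
      else if _ : winners X S P ⊂ S then
        combined X T (winners X S P) (restrictProfile (winners X S P) P)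
      else T S P := by
  rw [combined]
  rfl

theorem winners_pair (A B : Rule C) (S : Finset C) (P : List (List C)) :
    winners ![A, B] S P = {A S P, B S P} := by
  ext a
  simp [winners, Fin.exists_fin_two, eq_comm]

theorem winners_nonempty {k : ℕ} (X : Fin (k + 1) → Rule C) (S : Finset C)
    (P : List (List C)) : (winners X S P).Nonempty :=
  Finset.univ_nonempty.image _

theorem winners_subset {k : ℕ} {X : Fin (k + 1) → Rule C} (hX : ∀ j, IsRule (X j))
    {S : Finset C} (P : List (List C)) (hS : S.Nonempty) : winners X S P ⊆ S :=
  Finset.image_subset_iff.2 fun j _ => hX j S P hS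

theorem isRule_combined {k : ℕ} {X : Fin (k + 1) → Rule C} {T : Rule C}
    (hX : ∀ j, IsRule (X j)) (hT : IsRule T) : IsRule (combined X T) := by
  intro S
  induction S using Finset.strongInduction with
  | _ S ih =>
    intro P hS
    rw [combined_eq]
    split_ifs with _ _ hsub
    · exact hX 0 S P hS
    · exact hT S P hS
    · exact hsub.subset (ih _ hsub _ (winners_nonempty X S P))
    · exact hT S P hS

theorem combined_mem_winners {k : ℕ} {X : Fin (k + 1) → Rule C} {T : Rule C}
    (hX : ∀ j, IsRule (X j)) (hT : IsRule T) {S : Finset C} (P : List (List C))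
    (hS : S.Nonempty) : combined X T S P ∈ winners X S P := by
  rw [combined_eq]
  split_ifs with _ hW hsub
  · exact Finset.mem_image_of_mem _ (Finset.mem_univ 0)
  · rw [hW]
    exact hT S P hS
  · exact isRule_combined hX hT _ _ (winners_nonempty X S P)
  · exact absurd ((winners_subset hX P hS).ssubset_of_ne hW) hsub

section Pair

variable {A B T : Rule C} {S : Finset C} {P : List (List C)}

theorem combined_pair_of_eq (h : A S P = B S P) : combined ![A, B] T S P = A S P := by
  rw [combined_eq, winners_pair, ← h, Finset.pair_eq_singleton, if_pos (Finset.card_singleton _)]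
  rfl

theorem combined_pair_of_pair_eq (hAB : A S P ≠ B S P) (hS : {A S P, B S P} = S) :
    combined ![A, B] T S P = T S P := by
  rw [combined_eq, winners_pair, Finset.card_pair hAB, if_neg (by decide), if_pos hS]

theorem combined_pair_of_pair_ssubset (hAB : A S P ≠ B S P) (hS : {A S P, B S P} ⊂ S) :
    combined ![A, B] T S P
      = combined ![A, B] T {A S P, B S P} (restrictProfile {A S P, B S P} P) := by
  rw [combined_eq, winners_pair, Finset.card_pair hAB, if_neg (by decide), if_neg hS.ne,
    dif_pos hS]

theorem pair_subset_of_isRule (hA : IsRule A) (hB : IsRule B) (hS : S.Nonempty) :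
    {A S P, B S P} ⊆ S :=
  Finset.insert_subset (hA S P hS) (Finset.singleton_subset_iff.2 (hB S P hS))

theorem combined_pair_mem (hA : IsRule A) (hB : IsRule B) (hT : IsRule T) (hS : S.Nonempty) :
    combined ![A, B] T S P ∈ ({A S P, B S P} : Finset C) :=
  winners_pair A B S P ▸ combined_mem_winners (Fin.forall_fin_two.2 ⟨hA, hB⟩) hT P hS

end Pair

end Combined

theorem combinator_absorption_general [DecidableEq C]
    (X Y T : Rule C) (hX : IsRule X) (hY : IsRule Y) (hT : IsRule T)
    (S : Finset C) (P : List (List C)) (hS : S.Nonempty) :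
    combined (![combined ![X, Y] T, X] : Fin (1 + 1) → Rule C) T S P
      = combined (![X, Y] : Fin (1 + 1) → Rule C) T S P := by
  induction S using Finset.strongInduction generalizing P with
  | _ S ih =>
    set Z : Rule C := combined ![X, Y] T
    by_cases hZX : Z S P = X S P
    · exact combined_pair_of_eq hZX
    have hXY : X S P ≠ Y S P := fun h => hZX (combined_pair_of_eq h)
    have hZY : Z S P = Y S P := by
      have hZ := Finset.mem_insert.1 (combined_pair_mem (P := P) hX hY hT hS)
      exact Finset.mem_singleton.1 (hZ.resolve_left hZX)
    have hpair : ({Z S P, X S P} : Finset C) = {X S P, Y S P} := by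
      rw [hZY, Finset.pair_comm]
    rcases (pair_subset_of_isRule (P := P) hX hY hS).ssubset_or_eq with hsub | heq
    · rw [combined_pair_of_pair_ssubset hZX (hpair ▸ hsub), hpair]
      exact (ih _ hsub _ (Finset.insert_nonempty _ _)).trans
        (combined_pair_of_pair_ssubset hXY hsub).symm
    · rw [combined_pair_of_pair_eq hZX (hpair.trans heq)]
      exact (combined_pair_of_pair_eq hXY heq).symm

/-- Absorption law `(X + Y) + X = X + Y`: regarding the combined rule `X + Y`
(with tie-breaking `T`) as itself a voting rule, combining it with `X` (with
the same tie-breaking mechanism `T`) elects the same winner as `X + Y` on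
every nonempty `S ⊆ C` and every profile `P` on `S`. -/
theorem combinator_absorption [DecidableEq C] [Fintype C]
    (X Y T : Rule C) (hX : IsRule X) (hY : IsRule Y) (hT : IsRule T)
    (S : Finset C) (P : List (List C)) (hS : S.Nonempty) (hP : ProfileOn S P) :
    combined (![combined ![X, Y] T, X] : Fin (1 + 1) → Rule C) T S P
      = combined (![X, Y] : Fin (1 + 1) → Rule C) T S P :=
  combinator_absorption_general X Y T hX hY hT S P hS
end

section
/- Let K and k_1,…,k_t be positive integers with k_1+⋯+k_t = 2K. On the candidate set {a,b,c} with tie-breaking order c ≻ a ≻ b, let P be the weighted profile consisting of weight 6K of the vote b≻c≻a, weight 2K of a≻b≻c, and weight 2K of a≻c≻b, and let there be t manipulators where manipulator i casts one vote of weight 2k_i. Consider the runoff combination maximin+plurality. Then there exists a choice of manipulator votes making c the maximin+plurality winner of the combined weighted profile if and only if there exists S ⊆ {1,…,t} with Σ_{i∈S} k_i = K. -/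
/-
Weighted voting on the three-candidate set {a, b, c}. A weighted profile is a
finite list of pairs (vote, weight), where a vote is a duplicate-free list of
all three candidates (earlier = more preferred) and the weight is a positive
natural number. `T` always denotes the tie-breaking (strict linear) order.
-/

inductive Cand : Type
  | a | b | c
  deriving DecidableEq

instance : Fintype Cand :=
  ⟨{Cand.a, Cand.b, Cand.c}, fun x => by cases x <;> simp⟩

/-- A weighted profile: a list of (vote, weight) pairs. -/
abbrev WProfile := List (List Cand × ℕ)

/-- The total weight `n` of a weighted profile. -/
def totalW (P : WProfile) : ℕ := (P.map Prod.snd).sum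

/-- `N P x y`: the total weight of votes in `P` ranking `x` above `y`. -/
def Nw (P : WProfile) (x y : Cand) : ℕ :=
  ((P.filter fun p => p.1.idxOf x < p.1.idxOf y).map Prod.snd).sum

/-- The `k`-approval score of `e`: the total weight of votes ranking `e`
among the top `k` positions. -/
def kApproval (P : WProfile) (k : ℕ) (e : Cand) : ℕ :=
  ((P.filter fun p => p.1.idxOf e < k).map Prod.snd).sum

/-- The Bucklin score of `e`: the least `k` such that the `k`-approval score
of `e` is strictly greater than half the total weight. -/
noncomputable def bucklinScore (P : WProfile) (e : Cand) : ℕ :=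
  sInf {k | totalW P < 2 * kApproval P k e}

/-- `v` is a vote: a strict linear order of all three candidates. -/
def ValidVote (v : List Cand) : Prop := v.Nodup ∧ v.toFinset = Finset.univ

/-- A valid weighted profile: every vote is a linear order and every weight is
positive. -/
def ValidWProfile (P : WProfile) : Prop := ∀ p ∈ P, ValidVote p.1 ∧ 0 < p.2

/-- The `T`-greatest candidate among the maximisers of `f`. -/
def argmaxT (T : LinearOrder Cand) (f : Cand → ℕ) : Cand :=
  @Finset.max' Cand T (Finset.univ.filter fun e => ∀ z, f z ≤ f e) (by
    obtain ⟨w, hw, hm⟩ := Finset.exists_max_image Finset.univ f ⟨Cand.a, Finset.mem_univ _⟩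
    exact ⟨w, Finset.mem_filter.2 ⟨Finset.mem_univ _, fun z => hm z (Finset.mem_univ _)⟩⟩)

/-- The `T`-greatest candidate among the minimisers of `f`. -/
def argminT (T : LinearOrder Cand) (f : Cand → ℕ) : Cand :=
  @Finset.max' Cand T (Finset.univ.filter fun e => ∀ z, f e ≤ f z) (by
    obtain ⟨w, hw, hm⟩ := Finset.exists_min_image Finset.univ f ⟨Cand.a, Finset.mem_univ _⟩
    exact ⟨w, Finset.mem_filter.2 ⟨Finset.mem_univ _, fun z => hm z (Finset.mem_univ _)⟩⟩)

/-- The plurality score of `e`: the total weight of votes ranking `e` first. -/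
def pluralityScore (P : WProfile) (e : Cand) : ℕ :=
  ((P.filter fun p => p.1.head? = some e).map Prod.snd).sum

/-- The plurality winner. -/
def pluralityWinner (T : LinearOrder Cand) (P : WProfile) : Cand :=
  argmaxT T (pluralityScore P)

/-- The Copeland score of `x`: the number of candidates `z ≠ x` with
`N(x,z) > N(z,x)`. -/
def copelandScore (P : WProfile) (x : Cand) : ℕ :=
  (Finset.univ.filter fun z => z ≠ x ∧ Nw P z x < Nw P x z).card

/-- The Copeland winner. -/
def copelandWinner (T : LinearOrder Cand) (P : WProfile) : Cand :=
  argmaxT T (copelandScore P)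

/-- The maximin score of `x`: the minimum of `N(x,z)` over `z ≠ x`. -/
def maximinScore (P : WProfile) (x : Cand) : ℕ :=
  (((Finset.univ : Finset Cand).erase x).image fun z => Nw P x z).min' (by
    apply Finset.Nonempty.image
    cases x <;> decide)

/-- The maximin winner. -/
def maximinWinner (T : LinearOrder Cand) (P : WProfile) : Cand :=
  argmaxT T (maximinScore P)

/-- The Bucklin winner: the `T`-greatest candidate of minimal Bucklin score. -/
noncomputable def bucklinWinner (T : LinearOrder Cand) (P : WProfile) : Cand :=
  argminT T (bucklinScore P)

/-- Winner of the pairwise contest between `x` and `z` (the `T`-greater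
candidate winning on a tie). -/
def pairWin (T : LinearOrder Cand) (P : WProfile) (x z : Cand) : Cand :=
  if Nw P z x < Nw P x z then x
  else if Nw P x z < Nw P z x then z
  else if T.lt x z then z else x

/-- The candidate other than the two (distinct) given ones. -/
def third (x y : Cand) : Cand :=
  if Cand.a ≠ x ∧ Cand.a ≠ y then Cand.a
  else if Cand.b ≠ x ∧ Cand.b ≠ y then Cand.b
  else Cand.c

/-- The cup winner for the agenda in which `p` and `q` meet first and the
winner then meets the remaining candidate. -/
def cupWinner (T : LinearOrder Cand) (p q : Cand) (P : WProfile) : Cand :=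
  pairWin T P (pairWin T P p q) (third p q)

/-- Run-off combination `X + Y`: the common winner if `X` and `Y` agree;
otherwise the pairwise-majority winner between the two winners, with the
`T`-greater candidate winning a tied run-off. -/
def runoffWinner (T : LinearOrder Cand) (X Y : WProfile → Cand) (P : WProfile) : Cand :=
  let x := X P
  let y := Y P
  if x = y then x
  else if Nw P y x < Nw P x y then x
  else if Nw P x y < Nw P y x then y
  else if T.lt x y then y else x

/-- Tie-breaking priority realising the order c ≻ a ≻ b. -/
def prio : Cand → ℕ
  | .a => 1
  | .b => 0
  | .c => 2

/-- The tie-breaking order c ≻ a ≻ b. -/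
def Tcab : LinearOrder Cand := LinearOrder.lift' prio (by decide)

/-- The non-manipulators' profile: weight 6K of b≻c≻a, 2K of a≻b≻c and
2K of a≻c≻b. -/
def P16 (K : ℕ) : WProfile :=
  [([Cand.b, Cand.c, Cand.a], 6 * K), ([Cand.a, Cand.b, Cand.c], 2 * K),
   ([Cand.a, Cand.c, Cand.b], 2 * K)]

/-!
The manipulators carry total weight `4K`. If `c` wins the runoff, it must be the maximin
winner, since its plurality score is at most `4K < 6K`, and `a` must be the plurality winner,
since `b` would beat `c` in the runoff by at least `8K` to at most `6K`. The maximin score of `c`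
is at most `N(c,b) ≤ 6K`, that of `b` at least `6K`; so no manipulator ranks `b` above `a`, and
then the score `min(8K, N(a,c))` of `a` lets the manipulators give `a ≻ c` at most `2K`. On the
plurality side `a` needs at least `2K` of first places from the manipulators, and each such vote
ranks `a` above `c`. Hence the manipulators ranking `a` above `c` carry exactly half the weight.
Conversely, voting `a ≻ c ≻ b` with one half and `c ≻ a ≻ b` with the other ties all maximin
scores at `6K` and makes `a` the plurality winner, whom `c` beats `8K` to `6K`.
-/

open Cand

section Profiles

@[simp] lemma Nw_nil (x y : Cand) : Nw [] x y = 0 := rfl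

@[simp] lemma Nw_cons (p : List Cand × ℕ) (P : WProfile) (x y : Cand) :
    Nw (p :: P) x y = (if p.1.idxOf x < p.1.idxOf y then p.2 else 0) + Nw P x y := by
  by_cases h : p.1.idxOf x < p.1.idxOf y <;> simp [Nw, h]

@[simp] lemma Nw_append (P Q : WProfile) (x y : Cand) :
    Nw (P ++ Q) x y = Nw P x y + Nw Q x y := by
  simp [Nw, List.filter_append]

@[simp] lemma pluralityScore_nil (e : Cand) : pluralityScore [] e = 0 := rfl

@[simp] lemma pluralityScore_cons (p : List Cand × ℕ) (P : WProfile) (e : Cand) :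
    pluralityScore (p :: P) e = (if p.1.head? = some e then p.2 else 0) + pluralityScore P e := by
  by_cases h : p.1.head? = some e <;> simp [pluralityScore, h]

@[simp] lemma pluralityScore_append (P Q : WProfile) (e : Cand) :
    pluralityScore (P ++ Q) e = pluralityScore P e + pluralityScore Q e := by
  simp [pluralityScore, List.filter_append]

lemma Nw_le_totalW (P : WProfile) (x y : Cand) : Nw P x y ≤ totalW P := by
  induction P with
  | nil => rfl
  | cons p P ih =>
    simp only [Nw_cons, totalW, List.map_cons, List.sum_cons] at ih ⊢
    split <;> omega

variable {P : WProfile} {x y : Cand}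

lemma ValidVote.mem {v : List Cand} (hv : ValidVote v) (x : Cand) : x ∈ v :=
  List.mem_toFinset.1 (hv.2 ▸ Finset.mem_univ x)

lemma ValidVote.idxOf_ne {v : List Cand} (hv : ValidVote v) (hxy : x ≠ y) :
    v.idxOf x ≠ v.idxOf y :=
  mt (List.idxOf_inj (hv.mem x)).1 hxy

lemma Nw_add_Nw_swap (hP : ∀ p ∈ P, ValidVote p.1) (hxy : x ≠ y) :
    Nw P x y + Nw P y x = totalW P := by
  induction P with
  | nil => rfl
  | cons p P ih =>
    have hne := (hP p List.mem_cons_self).idxOf_ne hxy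
    have := ih fun q hq => hP q (List.mem_cons_of_mem p hq)
    simp only [Nw_cons, totalW, List.map_cons, List.sum_cons] at this ⊢
    split <;> split <;> omega

lemma pluralityScore_le_Nw (hP : ∀ p ∈ P, ValidVote p.1) (hxy : x ≠ y) :
    pluralityScore P x ≤ Nw P x y := by
  induction P with
  | nil => rfl
  | cons p P ih =>
    have hne := (hP p List.mem_cons_self).idxOf_ne hxy
    have := ih fun q hq => hP q (List.mem_cons_of_mem p hq)
    have hfirst : p.1.head? = some x → p.1.idxOf x < p.1.idxOf y := by
      obtain ⟨_ | ⟨z, v⟩, n⟩ := p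
      · simp
      · rintro ⟨⟩
        simpa [Nat.pos_iff_ne_zero] using hne.symm
    simp only [Nw_cons, pluralityScore_cons]
    split_ifs with hx hlt <;> first | omega | exact absurd (hfirst hx) hlt

end Profiles

section OfFn

variable {t : ℕ}

lemma Nw_eq_sum_map (P : WProfile) (x y : Cand) :
    Nw P x y = (P.map fun p => if p.1.idxOf x < p.1.idxOf y then p.2 else 0).sum := by
  induction P with
  | nil => rfl
  | cons p P ih => simp [ih]

lemma pluralityScore_eq_sum_map (P : WProfile) (e : Cand) :
    pluralityScore P e = (P.map fun p => if p.1.head? = some e then p.2 else 0).sum := by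
  induction P with
  | nil => rfl
  | cons p P ih => simp [ih]

lemma totalW_ofFn (f : Fin t → List Cand × ℕ) : totalW (List.ofFn f) = ∑ i, (f i).2 := by
  simp [totalW, List.sum_ofFn]

lemma Nw_ofFn (f : Fin t → List Cand × ℕ) (x y : Cand) :
    Nw (List.ofFn f) x y =
      ∑ i ∈ Finset.univ.filter (fun i => (f i).1.idxOf x < (f i).1.idxOf y), (f i).2 := by
  simp [Nw_eq_sum_map, List.sum_ofFn, Finset.sum_filter]

lemma sum_ofFn_ite (S : Finset (Fin t)) (u w : List Cand) (m : Fin t → ℕ)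
    (q : List Cand → Prop) [DecidablePred q] :
    ((List.ofFn fun i => (if i ∈ S then u else w, m i)).map
        fun p => if q p.1 then p.2 else 0).sum =
      (if q u then ∑ i ∈ S, m i else 0) + (if q w then ∑ i ∈ Sᶜ, m i else 0) := by
  rw [List.map_ofFn, List.sum_ofFn, ← Finset.sum_add_sum_compl S]
  congr 1
  · rw [Finset.sum_congr rfl fun i hi => (by simp [hi] : _ = if q u then m i else 0),
      Finset.sum_ite_irrel, Finset.sum_const_zero]
  · rw [Finset.sum_congr rfl fun i hi =>
        (by simp [Finset.mem_compl.1 hi] : _ = if q w then m i else 0),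
      Finset.sum_ite_irrel, Finset.sum_const_zero]

lemma Nw_ofFn_ite (S : Finset (Fin t)) (u w : List Cand) (m : Fin t → ℕ) (x y : Cand) :
    Nw (List.ofFn fun i => (if i ∈ S then u else w, m i)) x y =
      Nw [(u, ∑ i ∈ S, m i), (w, ∑ i ∈ Sᶜ, m i)] x y :=
  (Nw_eq_sum_map ..).trans <| (sum_ofFn_ite S u w m fun v => v.idxOf x < v.idxOf y).trans <| by
    simp

lemma pluralityScore_ofFn_ite (S : Finset (Fin t)) (u w : List Cand) (m : Fin t → ℕ)
    (e : Cand) :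
    pluralityScore (List.ofFn fun i => (if i ∈ S then u else w, m i)) e =
      pluralityScore [(u, ∑ i ∈ S, m i), (w, ∑ i ∈ Sᶜ, m i)] e :=
  (pluralityScore_eq_sum_map ..).trans <|
    (sum_ofFn_ite S u w m fun v => v.head? = some e).trans <| by simp

end OfFn
section Rules

variable (T : LinearOrder Cand)

lemma le_argmaxT (f : Cand → ℕ) (z : Cand) : f z ≤ f (argmaxT T f) :=
  (Finset.mem_filter.1
    (@Finset.max'_mem Cand T (Finset.univ.filter fun e => ∀ z, f z ≤ f e) _)).2 z

lemma argmaxT_eq {f : Cand → ℕ} {x : Cand} (hmax : ∀ z, f z ≤ f x)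
    (htie : ∀ z, f x ≤ f z → T.le z x) : argmaxT T f = x :=
  T.le_antisymm _ _ (htie _ (le_argmaxT T f x))
    (@Finset.le_max' Cand T _ x (Finset.mem_filter.2 ⟨Finset.mem_univ _, hmax⟩))

lemma maximinScore_eq_min (P : WProfile) (x y z : Cand) (hxy : x ≠ y := by decide)
    (hxz : x ≠ z := by decide) (hyz : y ≠ z := by decide) :
    maximinScore P x = min (Nw P x y) (Nw P x z) := by
  have hothers : (Finset.univ : Finset Cand).erase x = {y, z} := by
    revert hxy hxz hyz; cases x <;> cases y <;> cases z <;> decide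
  simp only [maximinScore, hothers, Finset.image_insert, Finset.image_singleton,
    Finset.min'_pair]

variable {T} {X Y : WProfile → Cand} {P : WProfile}

lemma runoffWinner_eq_or : runoffWinner T X Y P = X P ∨ runoffWinner T X Y P = Y P := by
  simp only [runoffWinner]
  split_ifs <;> simp

lemma runoffWinner_eq_left (hne : X P ≠ Y P) (h : Nw P (Y P) (X P) < Nw P (X P) (Y P)) :
    runoffWinner T X Y P = X P := by
  simp only [runoffWinner, if_neg hne, if_pos h]

lemma runoffWinner_eq_right (hne : X P ≠ Y P) (h : Nw P (X P) (Y P) < Nw P (Y P) (X P)) :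
    runoffWinner T X Y P = Y P := by
  simp only [runoffWinner, if_neg hne, if_neg h.asymm, if_pos h]

lemma runoffWinner_maximin_plurality_congr {P' : WProfile} (hN : ∀ x y, Nw P x y = Nw P' x y)
    (hpl : ∀ e, pluralityScore P e = pluralityScore P' e) :
    runoffWinner T (maximinWinner T) (pluralityWinner T) P =
      runoffWinner T (maximinWinner T) (pluralityWinner T) P' := by
  have hN' : Nw P = Nw P' := funext₂ hN
  have hpl' : pluralityScore P = pluralityScore P' := funext hpl
  have hmm : maximinScore P = maximinScore P' := by
    funext x; simp only [maximinScore, hN']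
  unfold runoffWinner maximinWinner pluralityWinner
  rw [hN', hpl', hmm]

end Rules

lemma argmaxT_Tcab_eq_c {f : Cand → ℕ} (h : ∀ z, f z ≤ f c) : argmaxT Tcab f = c :=
  argmaxT_eq Tcab h fun z _ => by cases z <;> decide

lemma argmaxT_Tcab_eq_a {f : Cand → ℕ} (hb : f b ≤ f a) (hc : f c < f a) :
    argmaxT Tcab f = a :=
  argmaxT_eq Tcab (fun z => by cases z <;> omega) fun z hz => by
    cases z
    · decide
    · decide
    · omega

section Manipulation

variable {K : ℕ} {M : WProfile}

lemma pluralityWinner_ne_c (hK : 0 < K) (hM : ∀ p ∈ M, ValidVote p.1)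
    (htot : totalW M = 4 * K) : pluralityWinner Tcab (P16 K ++ M) ≠ c := by
  intro h
  have hb := le_argmaxT Tcab (pluralityScore (P16 K ++ M)) b
  rw [← pluralityWinner, h] at hb
  have hc := (pluralityScore_le_Nw hM (x := c) (y := a) (by decide)).trans (Nw_le_totalW M c a)
  simp [P16] at hb
  omega

lemma Nw_a_c_le_of_maximinWinner_eq_c (hK : 0 < K) (hM : ∀ p ∈ M, ValidVote p.1)
    (htot : totalW M = 4 * K) (h : maximinWinner Tcab (P16 K ++ M) = c) :
    Nw M a c ≤ 2 * K := by
  have ha := le_argmaxT Tcab (maximinScore (P16 K ++ M)) a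
  have hb := le_argmaxT Tcab (maximinScore (P16 K ++ M)) b
  rw [← maximinWinner, h] at ha hb
  rw [maximinScore_eq_min _ a b c, maximinScore_eq_min _ c a b] at ha
  rw [maximinScore_eq_min _ b a c, maximinScore_eq_min _ c a b] at hb
  have hab := Nw_add_Nw_swap hM (x := a) (y := b) (by decide)
  have hcb := Nw_add_Nw_swap hM (x := c) (y := b) (by decide)
  have hca := Nw_le_totalW M c a
  simp [P16] at ha hb
  omega

lemma le_Nw_a_c_of_pluralityWinner_eq_a (hM : ∀ p ∈ M, ValidVote p.1)
    (h : pluralityWinner Tcab (P16 K ++ M) = a) : 2 * K ≤ Nw M a c := by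
  have hb := le_argmaxT Tcab (pluralityScore (P16 K ++ M)) b
  rw [← pluralityWinner, h] at hb
  have ha := pluralityScore_le_Nw hM (x := a) (y := c) (by decide)
  simp [P16] at hb
  omega

lemma winners_of_runoffWinner_eq_c (hK : 0 < K) (hM : ∀ p ∈ M, ValidVote p.1)
    (htot : totalW M = 4 * K)
    (h : runoffWinner Tcab (maximinWinner Tcab) (pluralityWinner Tcab) (P16 K ++ M) = c) :
    maximinWinner Tcab (P16 K ++ M) = c ∧ pluralityWinner Tcab (P16 K ++ M) = a := by
  have hpc := pluralityWinner_ne_c hK hM htot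
  have hmc : maximinWinner Tcab (P16 K ++ M) = c := by
    rcases runoffWinner_eq_or (T := Tcab) (X := maximinWinner Tcab) (Y := pluralityWinner Tcab)
      (P := P16 K ++ M) with hx | hy
    · exact hx ▸ h
    · exact absurd (hy ▸ h) hpc
  refine ⟨hmc, ?_⟩
  cases hp : pluralityWinner Tcab (P16 K ++ M) with
  | a => rfl
  | b =>
    have hcb := Nw_le_totalW M c b
    have hb : runoffWinner Tcab (maximinWinner Tcab) (pluralityWinner Tcab) (P16 K ++ M) = b :=
      (runoffWinner_eq_right (by rw [hmc, hp]; decide)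
        (by rw [hmc, hp]; simp [P16]; omega)).trans hp
    exact absurd (hb.symm.trans h) (by decide)
  | c => exact absurd hp hpc

lemma Nw_a_c_eq_of_runoffWinner_eq_c (hK : 0 < K) (hM : ∀ p ∈ M, ValidVote p.1)
    (htot : totalW M = 4 * K)
    (h : runoffWinner Tcab (maximinWinner Tcab) (pluralityWinner Tcab) (P16 K ++ M) = c) :
    Nw M a c = 2 * K :=
  have ⟨hmc, hpa⟩ := winners_of_runoffWinner_eq_c hK hM htot h
  le_antisymm (Nw_a_c_le_of_maximinWinner_eq_c hK hM htot hmc)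
    (le_Nw_a_c_of_pluralityWinner_eq_a hM hpa)

lemma runoffWinner_P16_balanced (hK : 0 < K) :
    runoffWinner Tcab (maximinWinner Tcab) (pluralityWinner Tcab)
      (P16 K ++ [([a, c, b], 2 * K), ([c, a, b], 2 * K)]) = c := by
  set Q := P16 K ++ [([a, c, b], 2 * K), ([c, a, b], 2 * K)]
  have htie : ∀ z, maximinScore Q z = 6 * K := by
    intro z
    cases z
    · rw [maximinScore_eq_min _ a b c]
      simp [Q, P16]; omega
    · rw [maximinScore_eq_min _ b a c]
      simp [Q, P16]
    · rw [maximinScore_eq_min _ c a b]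
      simp [Q, P16]; omega
  have hmc : maximinWinner Tcab Q = c := argmaxT_Tcab_eq_c fun z => by rw [htie, htie]
  have hpa : pluralityWinner Tcab Q = a :=
    argmaxT_Tcab_eq_a (by simp [Q, P16]; omega) (by simp [Q, P16]; omega)
  rw [runoffWinner_eq_left (by rw [hmc, hpa]; decide) (by rw [hmc, hpa]; simp [Q, P16]; omega),
    hmc]

end Manipulation

theorem maximin_plurality_partition_general
    (K : ℕ) (hK : 0 < K) (t : ℕ) (k : Fin t → ℕ)
    (hsum : ∑ i, k i = 2 * K) :
    (∃ v : Fin t → List Cand, (∀ i, ValidVote (v i)) ∧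
        runoffWinner Tcab (maximinWinner Tcab) (pluralityWinner Tcab)
          (P16 K ++ List.ofFn fun i => (v i, 2 * k i)) = Cand.c) ↔
    (∃ S : Finset (Fin t), ∑ i ∈ S, k i = K) := by
  constructor
  · rintro ⟨v, hv, hwin⟩
    have hM : ∀ p ∈ List.ofFn fun i => (v i, 2 * k i), ValidVote p.1 := by
      simp only [List.mem_ofFn]
      rintro _ ⟨i, rfl⟩
      exact hv i
    have htot : totalW (List.ofFn fun i => (v i, 2 * k i)) = 4 * K := by
      rw [totalW_ofFn, ← Finset.mul_sum, hsum]; ring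
    have hac := Nw_a_c_eq_of_runoffWinner_eq_c hK hM htot hwin
    rw [Nw_ofFn, ← Finset.mul_sum] at hac
    exact ⟨_, Nat.eq_of_mul_eq_mul_left two_pos hac⟩
  · rintro ⟨S, hS⟩
    have hSc : ∑ i ∈ Sᶜ, k i = K := by
      have := Finset.sum_add_sum_compl S k
      omega
    have hvalid : ∀ i, ValidVote (if i ∈ S then [a, c, b] else [c, a, b]) := fun i => by
      split <;> exact ⟨by decide, by decide⟩
    refine ⟨_, hvalid, ?_⟩
    rw [runoffWinner_maximin_plurality_congr
      (P' := P16 K ++ [([a, c, b], 2 * K), ([c, a, b], 2 * K)])]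
    · exact runoffWinner_P16_balanced hK
    all_goals simp [Nw_ofFn_ite, pluralityScore_ofFn_ite, ← Finset.mul_sum, hS, hSc]

/-- Reduction from PARTITION to manipulating `maximin + plurality`
(tie-breaking c ≻ a ≻ b): manipulators with weights `2k₁, …, 2k_t` (where
`k₁ + ⋯ + k_t = 2K`) can make `c` win iff the `kᵢ` can be partitioned into
two halves summing to `K`. -/
theorem maximin_plurality_partition
    (K : ℕ) (hK : 0 < K) (t : ℕ) (k : Fin t → ℕ)
    (hk : ∀ i, 0 < k i) (hsum : ∑ i, k i = 2 * K) :
    (∃ v : Fin t → List Cand, (∀ i, ValidVote (v i)) ∧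
        runoffWinner Tcab (maximinWinner Tcab) (pluralityWinner Tcab)
          (P16 K ++ List.ofFn fun i => (v i, 2 * k i)) = Cand.c) ↔
    (∃ S : Finset (Fin t), ∑ i ∈ S, k i = K) :=
  maximin_plurality_partition_general K hK t k hsum
end
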